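/- arXiv:1610.06525 — 8 statements merged into one kernel-verified Lean document; each statement's English description precedes it below -/
import Mathlib

section
/- Let θ ∈ ℝ^n and define g(θ) = Σ_{i=1}^n [(α−1)θ_i − β e^{θ_i}] with α > 1, β > 0. For any constant C ∈ ℝ, the function h(θ) = C + g(θ) satisfies h(θ) → −∞ as ‖θ‖ → ∞; consequently all super-level sets of h are bounded. -/
open Finset Filter

/-- Pointwise bound: `(α-1)t - β e^t ≤ D - ε |t|`. -/
lemma gamma_term_bound (α β : ℝ) (hα : 1 < α) (hβ : 0 < β) (t : ℝ) :
    (α - 1) * t - β * Real.exp t ≤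
      max 0 (α * (Real.log (α / β) - 1)) - min (α - 1) 1 * |t| := by
  set D := max 0 (α * (Real.log (α / β) - 1)) with hD
  set ε := min (α - 1) 1 with hε
  have hε1 : ε ≤ 1 := min_le_right _ _
  have hεα : ε ≤ α - 1 := min_le_left _ _
  rcases le_or_gt t 0 with ht | ht
  · have habs : |t| = -t := abs_of_nonpos ht
    have h1 : (α - 1) * t ≤ ε * t := by
      nlinarith [min_le_left (α - 1) 1]
    have h2 : 0 < β * Real.exp t := by positivity
    have : ε * t = -(ε * |t|) := by rw [habs]; ring
    nlinarith [le_max_left 0 (α * (Real.log (α / β) - 1))]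
  · have habs : |t| = t := abs_of_pos ht
    have hs : 0 < α / β := by positivity
    have key : (t - Real.log (α / β)) + 1 ≤ Real.exp (t - Real.log (α / β)) :=
      Real.add_one_le_exp _
    have hexp : Real.exp (t - Real.log (α / β)) = Real.exp t * (β / α) := by
      rw [Real.exp_sub, Real.exp_log hs]
      field_simp
    rw [hexp] at key
    -- β e^t ≥ α t - α (log(α/β) - 1)
    have h3 : α * t - α * (Real.log (α / β) - 1) ≤ β * Real.exp t := by
      have hαpos : 0 < α := by linarith
      have := mul_le_mul_of_nonneg_left key (le_of_lt hαpos)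
      have hb : α * (Real.exp t * (β / α)) = β * Real.exp t := by
        field_simp
      nlinarith
    have h4 : ε * t ≤ t := by nlinarith
    have h5 : α * (Real.log (α / β) - 1) ≤ D :=
      le_max_right _ _
    rw [habs]
    nlinarith

/-- Coercivity of the Gamma log-prior term after exponential reparametrization:
`h(θ) = C + Σ_i [(α−1)θ_i − β e^{θ_i}]` with `α > 1`, `β > 0` tends to `−∞` as
`‖θ‖ → ∞`, and consequently all super-level sets of `h` are bounded. -/
theorem gamma_logprior_coercive (n : ℕ) (α β C : ℝ) (hα : 1 < α) (hβ : 0 < β) :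
    let h : (Fin n → ℝ) → ℝ := fun θ => C + ∑ i, ((α - 1) * θ i - β * Real.exp (θ i))
    Filter.Tendsto h (Filter.cocompact (Fin n → ℝ)) Filter.atBot ∧
      ∀ c : ℝ, Bornology.IsBounded {θ : Fin n → ℝ | c ≤ h θ} := by
  intro h
  set D := max 0 (α * (Real.log (α / β) - 1)) with hD
  set ε := min (α - 1) 1 with hε
  have hεpos : 0 < ε := lt_min (by linarith) one_pos
  -- global bound: h θ ≤ C + n•D - ε‖θ‖
  have hbound : ∀ θ : Fin n → ℝ, h θ ≤ C + n * D - ε * ‖θ‖ := by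
    intro θ
    have hsum : ∑ i, ((α - 1) * θ i - β * Real.exp (θ i)) ≤
        ∑ i : Fin n, (D - ε * |θ i|) := by
      apply Finset.sum_le_sum
      intro i _
      exact gamma_term_bound α β hα hβ (θ i)
    have hnorm : ‖θ‖ ≤ ∑ i, |θ i| := by
      rcases Nat.eq_zero_or_pos n with hn | hn
      · subst hn
        simp [Subsingleton.elim θ 0]
      · rw [pi_norm_le_iff_of_nonneg (Finset.sum_nonneg fun i _ => abs_nonneg _)]
        intro i
        calc ‖θ i‖ = |θ i| := rfl
          _ ≤ ∑ j, |θ j| :=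
            Finset.single_le_sum (f := fun j => |θ j|) (fun j _ => abs_nonneg _) (Finset.mem_univ i)
    have : ∑ i : Fin n, (D - ε * |θ i|) = n * D - ε * ∑ i, |θ i| := by
      rw [Finset.sum_sub_distrib, ← Finset.mul_sum]
      simp [mul_comm]
    have hεnorm : ε * ‖θ‖ ≤ ε * ∑ i, |θ i| :=
      mul_le_mul_of_nonneg_left hnorm (le_of_lt hεpos)
    simp only [h]
    linarith
  have htend : Filter.Tendsto h (Filter.cocompact (Fin n → ℝ)) Filter.atBot := by
    have h1 : Filter.Tendsto (fun θ : Fin n → ℝ => C + n * D - ε * ‖θ‖)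
        (Filter.cocompact (Fin n → ℝ)) Filter.atBot := by
      have h2 : Filter.Tendsto (fun θ : Fin n → ℝ => ε * ‖θ‖)
          (Filter.cocompact (Fin n → ℝ)) Filter.atTop :=
        Filter.Tendsto.const_mul_atTop hεpos
          (tendsto_norm_cocompact_atTop (E := Fin n → ℝ))
      have h3 : Filter.Tendsto (fun θ : Fin n → ℝ => -(ε * ‖θ‖))
          (Filter.cocompact (Fin n → ℝ)) Filter.atBot := by
        exact tendsto_neg_atTop_atBot.comp h2
      have h4 := Filter.tendsto_atBot_add_const_left _ (C + n * D) h3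
      simpa [sub_eq_add_neg] using h4
    exact tendsto_atBot_mono hbound h1
  refine ⟨htend, fun c => ?_⟩
  have hev : ∀ᶠ θ in Filter.cocompact (Fin n → ℝ), h θ < c :=
    htend.eventually (Filter.eventually_lt_atBot c)
  rw [Filter.eventually_iff, Filter.mem_cocompact] at hev
  obtain ⟨K, hK, hKsub⟩ := hev
  apply hK.isBounded.subset
  intro θ hθ
  by_contra hθK
  have h5 : h θ < c := hKsub hθK
  have h6 : c ≤ h θ := hθ
  linarith
end

section
/- Suppose the comparison hypergraph H = (V, {N_i^+ : i ∈ V}) of a directed graph G is disconnected, i.e., V can be partitioned into nonempty sets S and T such that every out-neighborhood N_i^+ is entirely contained in S or entirely in T. Then for any transition counts D = {c_{ij}}, there exist λ, μ ∈ ℝ_{>0}^n with λ ≠ cμ for every c > 0 such that ℓ(λ; D) = ℓ(μ; D). In particular the maximum-likelihood estimate is never unique up to rescaling. -/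
open Finset

/-- If the comparison hypergraph is disconnected (the vertices can be partitioned into
nonempty `S` and `Sᶜ` with every out-neighborhood contained in one of the parts), then
for any transition counts there exist `λ, μ ∈ ℝ_{>0}^n` that are not positive rescalings
of one another yet have the same log-likelihood. -/
theorem ml_not_unique_if_hypergraph_disconnected (n : ℕ)
    (N : Fin n → Finset (Fin n)) (S : Finset (Fin n))
    (hS : S.Nonempty) (hT : Sᶜ.Nonempty)
    (hdisc : ∀ i, N i ⊆ S ∨ N i ⊆ Sᶜ)
    (c : Fin n → Fin n → ℝ) (hc : ∀ i j, 0 ≤ c i j) :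
    ∃ lam mu : Fin n → ℝ, (∀ i, 0 < lam i) ∧ (∀ i, 0 < mu i) ∧
      (∀ s : ℝ, 0 < s → lam ≠ s • mu) ∧
      (∑ i, ∑ j ∈ N i, c i j * (Real.log (lam j) - Real.log (∑ k ∈ N i, lam k))) =
      (∑ i, ∑ j ∈ N i, c i j * (Real.log (mu j) - Real.log (∑ k ∈ N i, mu k))) := by
  classical
  obtain ⟨x, hx⟩ := hS
  obtain ⟨y, hy⟩ := hT
  refine ⟨fun _ => 1, fun j => if j ∈ S then 2 else 1, fun i => one_pos, ?_, ?_, ?_⟩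
  · intro i; dsimp only; split <;> norm_num
  · intro s hs h
    have h1 : (1 : ℝ) = s * 2 := by
      have := congrFun h x
      simpa [hx] using this
    have h2 : (1 : ℝ) = s * 1 := by
      have hy' : y ∉ S := Finset.mem_compl.mp hy
      have := congrFun h y
      simpa [hy'] using this
    rw [mul_one] at h2
    rw [← h2] at h1
    norm_num at h1
  · refine Finset.sum_congr rfl fun i _ => ?_
    rcases Finset.eq_empty_or_nonempty (N i) with he | hne
    · simp [he]
    · have hcard : (0 : ℝ) < (N i).card := by
        exact_mod_cast Finset.card_pos.mpr hne
      rcases hdisc i with hsub | hsub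
      · have hmu : ∀ j ∈ N i, (if j ∈ S then (2:ℝ) else 1) = 2 := fun j hj => by
          simp [hsub hj]
        rw [Finset.sum_congr rfl hmu, Finset.sum_congr rfl (g := fun _ => (1:ℝ)) fun j hj => rfl]
        refine Finset.sum_congr rfl fun j hj => ?_
        dsimp only
        rw [hmu j hj]
        rw [Finset.sum_const, Finset.sum_const]
        simp only [nsmul_eq_mul, mul_one, Real.log_one]
        rw [Real.log_mul (ne_of_gt hcard) two_ne_zero]
        ring
      · have hmu : ∀ j ∈ N i, (if j ∈ S then (2:ℝ) else 1) = 1 := fun j hj => by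
          simp [Finset.mem_compl.mp (hsub hj)]
        rw [Finset.sum_congr rfl hmu]
        exact Finset.sum_congr rfl fun j hj => by dsimp only; rw [hmu j hj]
end

section
/- Let {a_{ij} : (i,j) ∈ E} be nonnegative reals on a directed graph G, and define the comparison graph H = (V, E') with (i,j) ∈ E' iff there exists k such that i,j ∈ N_k^+ and a_{kj} > 0. If H is strongly connected, then the reparametrized log-likelihood ℓ(θ) = Σ_i Σ_{j∈N_i^+} a_{ij}[θ_j − log Σ_{k∈N_i^+} w_{ik} e^{θ_k}], restricted to {θ : Σ_i θ_i = 0}, is strictly concave: for θ ≠ η in this hyperplane and p ∈ (0,1), ℓ(pθ + (1−p)η) > pℓ(θ) + (1−p)ℓ(η). -/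
/-!
With `LSEᵢ(θ) = log ∑_{k ∈ N i} w i k e^{θ k}`, the log-likelihood is linear in `θ` minus
`∑ᵢ (∑ⱼ aᵢⱼ) LSEᵢ(θ)`. After shifting `θ` and `η` by their log-normalizers, so that
`∑ w e^θ = ∑ w e^η = 1`, convexity of `exp` applied termwise shows that each `LSEᵢ` is convex, and
strictly so along `θ → η` unless `θ - η` is constant on `N i`. On the hyperplane `∑ θ = 0`,
`θ ≠ η` makes `θ - η` non-constant, so along a path of the strongly connected comparison graph it
changes across some edge `u, v ∈ N k` with `a k v > 0`; the term of `k` is then strictly concave.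
-/

open Finset Real

noncomputable def logSumExp {ι : Type*} (s : Finset ι) (w θ : ι → ℝ) : ℝ :=
  log (∑ k ∈ s, w k * exp (θ k))

section LogSumExp

variable {ι : Type*} {s : Finset ι} {w θ η : ι → ℝ} {p : ℝ}

lemma sum_mul_exp_pos (hw : ∀ k ∈ s, 0 < w k) (hs : s.Nonempty) :
    0 < ∑ k ∈ s, w k * exp (θ k) :=
  sum_pos (fun k hk => mul_pos (hw k hk) (exp_pos _)) hs

lemma logSumExp_sub_const (hw : ∀ k ∈ s, 0 < w k) (hs : s.Nonempty) (c : ℝ) :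
    logSumExp s w (fun k => θ k - c) = logSumExp s w θ - c := by
  simp_rw [logSumExp, exp_sub, mul_div_assoc', ← sum_div]
  rw [log_div (sum_mul_exp_pos hw hs).ne' (exp_pos c).ne', log_exp]

lemma sum_mul_exp_sub_logSumExp (hw : ∀ k ∈ s, 0 < w k) (hs : s.Nonempty) :
    ∑ k ∈ s, w k * exp (θ k - logSumExp s w θ) = 1 := by
  simp_rw [exp_sub, mul_div_assoc', ← sum_div]
  rw [logSumExp, exp_log (sum_mul_exp_pos hw hs), div_self (sum_mul_exp_pos hw hs).ne']

lemma exp_combo_le {x y : ℝ} (hp : 0 ≤ p) (hp1 : p ≤ 1) :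
    exp (p * x + (1 - p) * y) ≤ p * exp x + (1 - p) * exp y :=
  convexOn_exp.2 (Set.mem_univ x) (Set.mem_univ y) hp (sub_nonneg.2 hp1) (add_sub_cancel p 1)

lemma exp_combo_lt {x y : ℝ} (hxy : x ≠ y) (hp : 0 < p) (hp1 : p < 1) :
    exp (p * x + (1 - p) * y) < p * exp x + (1 - p) * exp y :=
  strictConvexOn_exp.2 (Set.mem_univ x) (Set.mem_univ y) hxy hp (sub_pos.2 hp1)
    (add_sub_cancel p 1)

lemma sum_mul_combo_exp_eq :
    ∑ k ∈ s, w k * (p * exp (θ k) + (1 - p) * exp (η k)) =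
      p * ∑ k ∈ s, w k * exp (θ k) + (1 - p) * ∑ k ∈ s, w k * exp (η k) := by
  rw [mul_sum, mul_sum, ← sum_add_distrib]
  exact sum_congr rfl fun k _ => by ring

lemma sum_mul_exp_combo_le (hw : ∀ k ∈ s, 0 ≤ w k) (hp : 0 ≤ p) (hp1 : p ≤ 1) :
    ∑ k ∈ s, w k * exp (p * θ k + (1 - p) * η k) ≤
      p * ∑ k ∈ s, w k * exp (θ k) + (1 - p) * ∑ k ∈ s, w k * exp (η k) :=
by
  rw [← sum_mul_combo_exp_eq]
  exact sum_le_sum fun k hk => mul_le_mul_of_nonneg_left (exp_combo_le hp hp1) (hw k hk)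

lemma sum_mul_exp_combo_lt (hw : ∀ k ∈ s, 0 < w k) (hne : ∃ k ∈ s, θ k ≠ η k)
    (hp : 0 < p) (hp1 : p < 1) :
    ∑ k ∈ s, w k * exp (p * θ k + (1 - p) * η k) <
      p * ∑ k ∈ s, w k * exp (θ k) + (1 - p) * ∑ k ∈ s, w k * exp (η k) := by
  obtain ⟨k, hk, hθη⟩ := hne
  rw [← sum_mul_combo_exp_eq]
  exact sum_lt_sum
    (fun k hk => mul_le_mul_of_nonneg_left (exp_combo_le hp.le hp1.le) (hw k hk).le)
    ⟨k, hk, mul_lt_mul_of_pos_left (exp_combo_lt hθη hp hp1) (hw k hk)⟩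

lemma logSumExp_combo_sub (hw : ∀ k ∈ s, 0 < w k) (hs : s.Nonempty) :
    logSumExp s w (p • θ + (1 - p) • η) - (p * logSumExp s w θ + (1 - p) * logSumExp s w η) =
      log (∑ k ∈ s, w k *
        exp (p * (θ k - logSumExp s w θ) + (1 - p) * (η k - logSumExp s w η))) := by
  rw [← logSumExp_sub_const hw hs, logSumExp]
  congr 1
  refine sum_congr rfl fun k _ => ?_
  simp only [Pi.add_apply, Pi.smul_apply, smul_eq_mul]
  congr 2
  ring

lemma logSumExp_combo_le (hw : ∀ k ∈ s, 0 < w k) (hp : 0 ≤ p) (hp1 : p ≤ 1) :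
    logSumExp s w (p • θ + (1 - p) • η) ≤ p * logSumExp s w θ + (1 - p) * logSumExp s w η := by
  obtain rfl | hs := s.eq_empty_or_nonempty
  · simp [logSumExp]
  rw [← sub_nonpos, logSumExp_combo_sub hw hs]
  refine log_nonpos (sum_nonneg fun k hk => (mul_pos (hw k hk) (exp_pos _)).le) ?_
  calc _ ≤ _ := sum_mul_exp_combo_le (fun k hk => (hw k hk).le) hp hp1
    _ = 1 := by simp only [sum_mul_exp_sub_logSumExp hw hs]; ring

lemma logSumExp_combo_lt (hw : ∀ k ∈ s, 0 < w k)
    (hne : ∃ u ∈ s, ∃ v ∈ s, θ u - η u ≠ θ v - η v) (hp : 0 < p) (hp1 : p < 1) :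
    logSumExp s w (p • θ + (1 - p) • η) < p * logSumExp s w θ + (1 - p) * logSumExp s w η := by
  obtain ⟨u, hu, v, hv, huv⟩ := hne
  have hs : s.Nonempty := ⟨u, hu⟩
  have hne' : ∃ k ∈ s, θ k - logSumExp s w θ ≠ η k - logSumExp s w η := by
    by_contra! h
    exact huv (by linarith [h u hu, h v hv])
  rw [← sub_neg, logSumExp_combo_sub hw hs]
  refine log_neg (sum_mul_exp_pos hw hs) ?_
  calc _ < _ := sum_mul_exp_combo_lt hw hne' hp hp1
    _ = 1 := by simp only [sum_mul_exp_sub_logSumExp hw hs]; ring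

end LogSumExp

lemma Relation.ReflTransGen.exists_rel_apply_ne {α β : Type*} {r : α → α → Prop} {f : α → β}
    {x y : α} (hxy : Relation.ReflTransGen r x y) (hf : f x ≠ f y) : ∃ u v, r u v ∧ f u ≠ f v := by
  by_contra! h
  exact hf (by simpa [Relation.reflTransGen_eq_self] using hxy.lift f h)

lemma exists_sub_ne_sub_of_sum_eq {ι : Type*} [Fintype ι] {θ η : ι → ℝ}
    (hsum : ∑ i, θ i = ∑ i, η i) (hne : θ ≠ η) : ∃ u v, θ u - η u ≠ θ v - η v := by
  by_contra! h
  obtain ⟨u, hu⟩ := Function.ne_iff.1 hne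
  have hcard : (Fintype.card ι : ℝ) * (θ u - η u) = 0 := by
    rw [← nsmul_eq_mul, ← card_univ, ← sum_const, ← sub_eq_zero.2 hsum, ← sum_sub_distrib]
    exact sum_congr rfl fun i _ => h u i
  have hcard_ne : (Fintype.card ι : ℝ) ≠ 0 := Nat.cast_ne_zero.2 (Fintype.card_pos_iff.2 ⟨u⟩).ne'
  exact hu (sub_eq_zero.1 ((mul_eq_zero.1 hcard).resolve_left hcard_ne))

noncomputable def loglik {ι : Type*} [Fintype ι] (N : ι → Finset ι) (w a : ι → ι → ℝ)
    (θ : ι → ℝ) : ℝ :=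
  ∑ i, ∑ j ∈ N i, a i j * (θ j - logSumExp (N i) (w i) θ)

lemma loglik_combo_sub {ι : Type*} [Fintype ι] (N : ι → Finset ι) (w a : ι → ι → ℝ)
    (θ η : ι → ℝ) (p : ℝ) :
    loglik N w a (p • θ + (1 - p) • η) - (p * loglik N w a θ + (1 - p) * loglik N w a η) =
      ∑ i, (∑ j ∈ N i, a i j) * (p * logSumExp (N i) (w i) θ + (1 - p) * logSumExp (N i) (w i) η
        - logSumExp (N i) (w i) (p • θ + (1 - p) • η)) := by
  simp only [loglik, mul_sum, ← sum_add_distrib, ← sum_sub_distrib, sum_mul]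
  exact sum_congr rfl fun i _ => sum_congr rfl fun j _ => by
    simp only [Pi.add_apply, Pi.smul_apply, smul_eq_mul]; ring

/-- If the comparison graph induced by nonnegative `{a_{ij}}` is strongly connected, the
reparametrized log-likelihood, restricted to the hyperplane `Σ_i θ_i = 0`, is strictly
concave. -/
theorem loglik_strictly_concave_of_strongly_connected (n : ℕ)
    (N : Fin n → Finset (Fin n)) (w : Fin n → Fin n → ℝ) (a : Fin n → Fin n → ℝ)
    (hw : ∀ i k, 0 < w i k) (ha : ∀ i j, 0 ≤ a i j)
    (hconn : ∀ i j : Fin n,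
      Relation.ReflTransGen (fun u v => ∃ k, u ∈ N k ∧ v ∈ N k ∧ 0 < a k v) i j) :
    let L : (Fin n → ℝ) → ℝ := fun θ =>
      ∑ i, ∑ j ∈ N i, a i j * (θ j - Real.log (∑ k ∈ N i, w i k * Real.exp (θ k)))
    ∀ θ η : Fin n → ℝ, (∑ i, θ i = 0) → (∑ i, η i = 0) → θ ≠ η →
      ∀ p : ℝ, 0 < p → p < 1 →
        p * L θ + (1 - p) * L η < L (p • θ + (1 - p) • η) := by
  intro L θ η hθ hη hθη p hp hp1
  change p * loglik N w a θ + (1 - p) * loglik N w a η < loglik N w a (p • θ + (1 - p) • η)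
  obtain ⟨u, v, huv⟩ := exists_sub_ne_sub_of_sum_eq (hθ.trans hη.symm) hθη
  obtain ⟨x, y, ⟨k, hx, hy, hay⟩, hxy⟩ := (hconn u v).exists_rel_apply_ne (f := θ - η) huv
  rw [← sub_pos, loglik_combo_sub]
  refine sum_pos' (fun i _ => mul_nonneg (sum_nonneg fun j _ => ha i j)
    (sub_nonneg.2 (logSumExp_combo_le (fun k _ => hw i k) hp.le hp1.le))) ⟨k, mem_univ k, ?_⟩
  exact mul_pos (hay.trans_le (single_le_sum (fun j _ => ha k j) hy))
    (sub_pos.2 (logSumExp_combo_lt (fun j _ => hw k j) ⟨x, hx, y, hy, hxy⟩ hp hp1))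
end

section
/- Let {a_{ij}} be nonnegative reals on a directed graph G and suppose the induced comparison graph is strongly connected (with (i,j) an edge iff there is k with i,j ∈ N_k^+ and a_{kj} > 0). Then for any unit vector u ∈ ℝ^n with Σ_i u_i = 0, the reparametrized log-likelihood satisfies ℓ(s u) → −∞ as s → ∞, where ℓ(θ) = Σ_i Σ_{j∈N_i^+} a_{ij}[θ_j − log Σ_{k∈N_i^+} w_{ik} e^{θ_k}] and w_{ik} ≥ 1. -/
open Finset Filter

/-!
Every term `a_{ij} (θ_j - log Σ_{k ∈ N_i} w_{ik} e^{θ_k})` is nonpositive, since the log-sum-exp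
dominates each `θ_k` with `k ∈ N_i` when `w_{ik} ≥ 1`. A nonzero `u` with `Σ u_i = 0` is not
constant, so a path of the comparison graph from some `p` to some `q` with `u_q < u_p` contains
an edge `x → y` (with `x, y ∈ N_k`, `a_{ky} > 0`) along which `u` strictly decreases. Keeping only
that term gives `ℓ(s u) ≤ a_{ky} (u_y - u_x) s`, a linear function of negative slope.
-/

lemma Relation.ReflTransGen.exists_rel_lt_of_lt {α β : Type*} [LinearOrder β] {r : α → α → Prop}
    (f : α → β) {p q : α} (h : Relation.ReflTransGen r p q) (hlt : f q < f p) :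
    ∃ x y, r x y ∧ f y < f x := by
  induction h with
  | refl => exact absurd hlt (lt_irrefl _)
  | @tail b c _ hbc ih =>
    by_cases hcb : f c < f b
    · exact ⟨b, c, hbc, hcb⟩
    · exact ih ((not_lt.mp hcb).trans_lt hlt)

lemma exists_lt_of_sum_eq_zero {ι : Type*} [Fintype ι] {u : ι → ℝ} (hu : u ≠ 0)
    (hsum : ∑ i, u i = 0) : ∃ p q, u q < u p := by
  by_contra! hconst
  obtain ⟨i, hi⟩ := Function.ne_iff.mp hu
  have hall : ∀ j, u j = u i := fun j => le_antisymm (hconst j i) (hconst i j)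
  have : (Fintype.card ι : ℝ) * u i = 0 := by
    simpa [Finset.sum_congr rfl fun j _ => hall j] using hsum
  have hcard : (Fintype.card ι : ℝ) ≠ 0 := Nat.cast_ne_zero.mpr (Fintype.card_pos_iff.mpr ⟨i⟩).ne'
  exact hi ((mul_eq_zero.mp this).resolve_left hcard)

lemma Finset.sum_le_of_mem_of_nonpos {ι M : Type*} [AddCommMonoid M] [Preorder M] [AddLeftMono M]
    {s : Finset ι} {f : ι → M} {x : ι}
    (hx : x ∈ s) (hf : ∀ y ∈ s, f y ≤ 0) : ∑ y ∈ s, f y ≤ f x := by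
  simpa using Finset.sum_le_sum_of_subset_of_nonpos' (singleton_subset_iff.mpr hx)
    fun y hy _ => hf y hy

lemma le_log_sum_mul_exp {ι : Type*} {s : Finset ι} {w θ : ι → ℝ} (hw : ∀ k ∈ s, 1 ≤ w k)
    {z : ι} (hz : z ∈ s) : θ z ≤ Real.log (∑ k ∈ s, w k * Real.exp (θ k)) := by
  have hexp : Real.exp (θ z) ≤ ∑ k ∈ s, w k * Real.exp (θ k) :=
    calc Real.exp (θ z) ≤ w z * Real.exp (θ z) :=
          le_mul_of_one_le_left (Real.exp_pos _).le (hw z hz)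
      _ ≤ ∑ k ∈ s, w k * Real.exp (θ k) :=
          single_le_sum (fun k hk => mul_nonneg (zero_le_one.trans (hw k hk))
            (Real.exp_pos _).le) hz
  simpa using Real.log_le_log (Real.exp_pos _) hexp

section LogLikelihood

variable {ι : Type*} (N : ι → Finset ι) (w a : ι → ι → ℝ)

noncomputable def logLik [Fintype ι] (θ : ι → ℝ) : ℝ :=
  ∑ i, ∑ j ∈ N i, a i j * (θ j - Real.log (∑ k ∈ N i, w i k * Real.exp (θ k)))

variable {N w a}

lemma logLik_term_le (hw : ∀ i k, 1 ≤ w i k) (ha : ∀ i j, 0 ≤ a i j) (θ : ι → ℝ) (i j : ι)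
    {z : ι} (hz : z ∈ N i) :
    a i j * (θ j - Real.log (∑ k ∈ N i, w i k * Real.exp (θ k))) ≤ a i j * (θ j - θ z) :=
  mul_le_mul_of_nonneg_left (sub_le_sub_left (le_log_sum_mul_exp (fun k _ => hw i k) hz) _)
    (ha i j)

lemma logLik_le_of_mem [Fintype ι] (hw : ∀ i k, 1 ≤ w i k) (ha : ∀ i j, 0 ≤ a i j)
    (θ : ι → ℝ) {k x y : ι} (hx : x ∈ N k) (hy : y ∈ N k) :
    logLik N w a θ ≤ a k y * (θ y - θ x) := by
  have hterm_nonpos : ∀ i, ∀ j ∈ N i,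
      a i j * (θ j - Real.log (∑ m ∈ N i, w i m * Real.exp (θ m))) ≤ 0 := fun i j hj => by
    simpa using logLik_term_le hw ha θ i j hj
  calc logLik N w a θ
      ≤ ∑ j ∈ N k, a k j * (θ j - Real.log (∑ m ∈ N k, w k m * Real.exp (θ m))) :=
        sum_le_of_mem_of_nonpos (mem_univ k) fun i _ => sum_nonpos (hterm_nonpos i)
    _ ≤ a k y * (θ y - Real.log (∑ m ∈ N k, w k m * Real.exp (θ m))) :=
        sum_le_of_mem_of_nonpos hy (hterm_nonpos k)
    _ ≤ a k y * (θ y - θ x) := logLik_term_le hw ha θ k y hx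

end LogLikelihood

theorem loglik_coercive_along_sum_zero_directions_general (n : ℕ)
    (N : Fin n → Finset (Fin n)) (w : Fin n → Fin n → ℝ) (a : Fin n → Fin n → ℝ)
    (hw : ∀ i k, 1 ≤ w i k) (ha : ∀ i j, 0 ≤ a i j)
    (hconn : ∀ i j : Fin n,
      Relation.ReflTransGen (fun u v => ∃ k, u ∈ N k ∧ v ∈ N k ∧ 0 < a k v) i j)
    (u : Fin n → ℝ) (hu : ‖u‖ = 1) (hsum : ∑ i, u i = 0) :
    Filter.Tendsto (fun s : ℝ =>
        ∑ i, ∑ j ∈ N i, a i j * ((s • u) j - Real.log (∑ k ∈ N i, w i k * Real.exp ((s • u) k))))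
      Filter.atTop Filter.atBot := by
  have hu0 : u ≠ 0 := norm_ne_zero_iff.mp (by rw [hu]; exact one_ne_zero)
  obtain ⟨p, q, hqp⟩ := exists_lt_of_sum_eq_zero hu0 hsum
  obtain ⟨x, y, ⟨k, hx, hy, hay⟩, hyx⟩ := (hconn p q).exists_rel_lt_of_lt u hqp
  have hslope : a k y * (u y - u x) < 0 := mul_neg_of_pos_of_neg hay (sub_neg.mpr hyx)
  have hbound : ∀ s : ℝ, logLik N w a (s • u) ≤ a k y * (u y - u x) * s := fun s => by
    simpa only [Pi.smul_apply, smul_eq_mul, mul_sub, mul_comm, mul_left_comm]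
      using logLik_le_of_mem hw ha (s • u) hx hy
  exact tendsto_atBot_mono hbound ((tendsto_const_mul_atBot_of_neg hslope).mpr tendsto_id)

/-- Coercivity of the reparametrized log-likelihood along directions orthogonal to the
all-ones vector: if the comparison graph induced by `{a_{ij}}` is strongly connected,
`w_{ik} ≥ 1`, not all `a_{ij}` vanish, and `u` is a unit vector with `Σ_i u_i = 0`, then
`ℓ(s u) → −∞` as `s → ∞`. -/
theorem loglik_coercive_along_sum_zero_directions (n : ℕ)
    (N : Fin n → Finset (Fin n)) (w : Fin n → Fin n → ℝ) (a : Fin n → Fin n → ℝ)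
    (hw : ∀ i k, 1 ≤ w i k) (ha : ∀ i j, 0 ≤ a i j)
    (hnz : ∃ i j, j ∈ N i ∧ 0 < a i j)
    (hconn : ∀ i j : Fin n,
      Relation.ReflTransGen (fun u v => ∃ k, u ∈ N k ∧ v ∈ N k ∧ 0 < a k v) i j)
    (u : Fin n → ℝ) (hu : ‖u‖ = 1) (hsum : ∑ i, u i = 0) :
    Filter.Tendsto (fun s : ℝ =>
        ∑ i, ∑ j ∈ N i, a i j * ((s • u) j - Real.log (∑ k ∈ N i, w i k * Real.exp ((s • u) k))))
      Filter.atTop Filter.atBot :=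
  loglik_coercive_along_sum_zero_directions_general n N w a hw ha hconn u hu hsum
end

section
/- Suppose the comparison graph induced by nonnegative reals {a_{ij}} on G is not strongly connected, with vertex partition into nonempty S and T such that no edge of the comparison graph goes from S to T. Then for every θ ∈ ℝ^n and every c > 0, defining θ̃ by θ̃_i = θ_i + c for i ∈ S and θ̃_i = θ_i for i ∈ T, the reparametrized log-likelihood satisfies ℓ(θ̃) ≥ ℓ(θ). -/
open Finset

/-- If no edge of the comparison graph induced by `{a_{ij}}` goes from `S` to its
complement, then shifting all coordinates of `θ` in `S` upward by `c > 0` does not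
decrease the reparametrized log-likelihood. -/
theorem loglik_nondecreasing_under_shift_of_disconnected_part (n : ℕ)
    (N : Fin n → Finset (Fin n)) (w : Fin n → Fin n → ℝ) (a : Fin n → Fin n → ℝ)
    (hw : ∀ i k, 0 < w i k) (ha : ∀ i j, 0 ≤ a i j)
    (S : Finset (Fin n)) (hS : S.Nonempty) (hT : Sᶜ.Nonempty)
    (hnoedge : ¬ ∃ (k u v : Fin n), u ∈ N k ∧ v ∈ N k ∧ 0 < a k v ∧ u ∈ S ∧ v ∉ S)
    (θ : Fin n → ℝ) (c : ℝ) (hc : 0 < c) :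
    let L : (Fin n → ℝ) → ℝ := fun φ =>
      ∑ i, ∑ j ∈ N i, a i j * (φ j - Real.log (∑ k ∈ N i, w i k * Real.exp (φ k)))
    L θ ≤ L (fun i => if i ∈ S then θ i + c else θ i) := by
  intro L
  apply Finset.sum_le_sum
  intro i _
  set A : ℝ := ∑ k ∈ N i, w i k * Real.exp (θ k) with hAdef
  set B : ℝ := ∑ k ∈ N i, w i k * Real.exp (if k ∈ S then θ k + c else θ k) with hBdef
  by_cases h : ∃ u ∈ N i, u ∈ S
  · obtain ⟨u, hu, huS⟩ := h
    have hApos : 0 < A :=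
      Finset.sum_pos' (fun k _ => (mul_pos (hw i k) (Real.exp_pos _)).le)
        ⟨u, hu, mul_pos (hw i u) (Real.exp_pos _)⟩
    have hBpos : 0 < B :=
      Finset.sum_pos' (fun k _ => (mul_pos (hw i k) (Real.exp_pos _)).le)
        ⟨u, hu, mul_pos (hw i u) (Real.exp_pos _)⟩
    have hBle : B ≤ Real.exp c * A := by
      rw [hBdef, hAdef, Finset.mul_sum]
      apply Finset.sum_le_sum
      intro k _
      by_cases hk : k ∈ S
      · rw [if_pos hk, Real.exp_add]; ring_nf; exact le_refl _
      · rw [if_neg hk]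
        have h1 : (1:ℝ) ≤ Real.exp c := by
          rw [Real.one_le_exp_iff]; exact hc.le
        nlinarith [mul_pos (hw i k) (Real.exp_pos (θ k))]
    have hlog : Real.log B ≤ Real.log A + c := by
      calc Real.log B ≤ Real.log (Real.exp c * A) := by
            apply Real.log_le_log hBpos hBle
        _ = Real.log A + c := by
            rw [Real.log_mul (Real.exp_pos c).ne' hApos.ne', Real.log_exp]; ring
    apply Finset.sum_le_sum
    intro j hj
    by_cases hjS : j ∈ S
    · simp only [if_pos hjS]
      apply mul_le_mul_of_nonneg_left _ (ha i j)
      linarith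
    · have haz : a i j = 0 := by
        by_contra hne
        exact hnoedge ⟨i, u, j, hu, hj, lt_of_le_of_ne (ha i j) (Ne.symm hne), huS, hjS⟩
      simp [haz]
  · push_neg at h
    have hBA : B = A := by
      rw [hBdef, hAdef]
      exact Finset.sum_congr rfl (fun k hk => by rw [if_neg (h k hk)])
    apply le_of_eq
    apply Finset.sum_congr rfl
    intro j hj
    rw [hBA]
    simp only [if_neg (h j hj)]
end

section
/- Let f^{(t)}(λ) be defined with Σ_{i} [(c_i^- + α − 1) log λ_i − c_i^+ (log Σ_{k∈N_i^+} λ_k^{(t)} + (Σ_{k∈N_i^+} λ_k)/(Σ_{k∈N_i^+} λ_k^{(t)}) − 1) − β λ_i]. Then for all λ, λ^{(t)} ∈ ℝ_{>0}^n, f^{(t)}(λ) ≤ L(λ), where L is the log-posterior L(λ) = Σ_i [(c_i^- + α − 1) log λ_i − c_i^+ log Σ_{k∈N_i^+} λ_k − β λ_i], with equality when λ = λ^{(t)}. -/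
open Finset

/-- Minorization property of the ChoiceRank surrogate: `f^{(t)}(λ) ≤ L(λ)` for all
positive `λ, λ^{(t)}`, with equality when `λ = λ^{(t)}`. -/
theorem choicerank_surrogate_minorizes (n : ℕ) (N : Fin n → Finset (Fin n))
    (hN : ∀ i, (N i).Nonempty) (cm cp : Fin n → ℝ)
    (hcm : ∀ i, 0 ≤ cm i) (hcp : ∀ i, 0 ≤ cp i)
    (α β : ℝ) (hα : 1 < α) (hβ : 0 < β)
    (lam lamt : Fin n → ℝ) (hlam : ∀ i, 0 < lam i) (hlamt : ∀ i, 0 < lamt i) :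
    let f : (Fin n → ℝ) → ℝ := fun l =>
      ∑ i, ((cm i + α - 1) * Real.log (l i)
            - cp i * (Real.log (∑ k ∈ N i, lamt k)
                      + (∑ k ∈ N i, l k) / (∑ k ∈ N i, lamt k) - 1)
            - β * l i)
    let L : (Fin n → ℝ) → ℝ := fun l =>
      ∑ i, ((cm i + α - 1) * Real.log (l i)
            - cp i * Real.log (∑ k ∈ N i, l k) - β * l i)
    f lam ≤ L lam ∧ f lamt = L lamt := by
  intro f L
  have hst : ∀ i, 0 < ∑ k ∈ N i, lamt k := fun i =>
    Finset.sum_pos (fun k _ => hlamt k) (hN i)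
  constructor
  · apply Finset.sum_le_sum
    intro i _
    have hs : 0 < ∑ k ∈ N i, lam k := Finset.sum_pos (fun k _ => hlam k) (hN i)
    have hratio : 0 < (∑ k ∈ N i, lam k) / (∑ k ∈ N i, lamt k) :=
      div_pos hs (hst i)
    have hlog : Real.log ((∑ k ∈ N i, lam k) / (∑ k ∈ N i, lamt k))
        ≤ (∑ k ∈ N i, lam k) / (∑ k ∈ N i, lamt k) - 1 :=
      Real.log_le_sub_one_of_pos hratio
    rw [Real.log_div hs.ne' (hst i).ne'] at hlog
    have key : Real.log (∑ k ∈ N i, lam k)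
        ≤ Real.log (∑ k ∈ N i, lamt k)
          + (∑ k ∈ N i, lam k) / (∑ k ∈ N i, lamt k) - 1 := by linarith
    have := mul_le_mul_of_nonneg_left key (hcp i)
    linarith
  · apply Finset.sum_congr rfl
    intro i _
    have : (∑ k ∈ N i, lamt k) / (∑ k ∈ N i, lamt k) = 1 :=
      div_self (hst i).ne'
    rw [this]
    ring
end

section
/- Let L: ℝ_{>0}^n → ℝ be a continuous function with a unique maximizer λ*, strictly concave after the reparametrization λ_i = e^{θ_i} (hence having λ* as its only stationary point), and let M: ℝ_{>0}^n → ℝ_{>0}^n be a continuous map satisfying L(M(λ)) ≥ L(λ) for all λ, with equality if and only if λ is a stationary point of L. Assume additionally the super-level sets {λ : L(λ) ≥ c} are compact. Then for any λ^{(0)} ∈ ℝ_{>0}^n, the iterates λ^{(t+1)} = M(λ^{(t)}) converge to λ*. -/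
open Filter

set_option maxHeartbeats 1000000 in
/-- Abstract convergence of minorization-maximization iterates: if `L` is continuous on
the positive orthant `P` with a unique maximizer `λ*` which is its only stationary point,
`M` is a continuous self-map of `P` that never decreases `L` and increases it strictly
except at `λ*`, and the super-level sets of `L` in `P` are compact, then the iterates
`λ^{(t+1)} = M(λ^{(t)})` converge to `λ*` from any positive starting point. -/
theorem mm_iterates_converge (n : ℕ) (L : (Fin n → ℝ) → ℝ)
    (M : (Fin n → ℝ) → (Fin n → ℝ)) (P : Set (Fin n → ℝ))
    (hP : P = {l : Fin n → ℝ | ∀ i, 0 < l i})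
    (hLcont : ContinuousOn L P) (hMcont : ContinuousOn M P)
    (hMmaps : Set.MapsTo M P P)
    (lamstar : Fin n → ℝ) (hstar : lamstar ∈ P)
    (hmax : ∀ l ∈ P, l ≠ lamstar → L l < L lamstar)
    (hascent : ∀ l ∈ P, L l ≤ L (M l))
    (hstationary : ∀ l ∈ P, (L (M l) = L l ↔ l = lamstar))
    (hcompact : ∀ c : ℝ, IsCompact {l | l ∈ P ∧ c ≤ L l}) :
    ∀ lam0 ∈ P, Filter.Tendsto (fun t => M^[t] lam0) Filter.atTop (nhds lamstar) := by
  intro lam0 hlam0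
  set x : ℕ → (Fin n → ℝ) := fun t => M^[t] lam0 with hx
  have hxP : ∀ t, x t ∈ P := by
    intro t
    induction t with
    | zero => simpa [hx] using hlam0
    | succ k ih =>
      have : x (k + 1) = M (x k) := by simp [hx, Function.iterate_succ_apply']
      rw [this]; exact hMmaps ih
  have hsucc : ∀ t, x (t + 1) = M (x t) := by
    intro t; simp [hx, Function.iterate_succ_apply']
  have hmono : Monotone fun t => L (x t) := by
    apply monotone_nat_of_le_succ
    intro t
    rw [hsucc t]
    exact hascent _ (hxP t)
  -- iterates stay in the compact set K
  set K : Set (Fin n → ℝ) := {l | l ∈ P ∧ L lam0 ≤ L l} with hK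
  have hKc : IsCompact K := hcompact (L lam0)
  have hxK : ∀ t, x t ∈ K := fun t => ⟨hxP t, by simpa [hx] using hmono (Nat.zero_le t)⟩
  -- L (x t) is bounded above, so converges to some ℓ
  have hbdd : BddAbove (Set.range fun t => L (x t)) := by
    rcases Set.range_nonempty (fun t => L (x t)) with _
    refine ⟨L lamstar, ?_⟩
    rintro y ⟨t, rfl⟩
    by_cases h : x t = lamstar
    · simp [h]
    · exact (hmax _ (hxP t) h).le
  obtain ⟨ℓ, hℓ⟩ : ∃ ℓ, Tendsto (fun t => L (x t)) atTop (nhds ℓ) :=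
    ⟨_, tendsto_atTop_ciSup hmono hbdd⟩
  -- key subsequence argument
  refine tendsto_of_subseq_tendsto fun ns hns => ?_
  obtain ⟨y, hyK, φ, hφ, hyt⟩ := hKc.tendsto_subseq (fun k => hxK (ns k))
  refine ⟨φ, ?_⟩
  have hyP : y ∈ P := hyK.1
  -- the subsequence indices tend to atTop
  have hidx : Tendsto (fun k => ns (φ k)) atTop atTop :=
    hns.comp hφ.tendsto_atTop
  have hseq_in : ∀ k, x (ns (φ k)) ∈ P := fun k => hxP _
  have hy_within : Tendsto (fun k => x (ns (φ k))) atTop (nhdsWithin y P) :=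
    tendsto_nhdsWithin_of_tendsto_nhds_of_eventually_within _ hyt
      (Eventually.of_forall hseq_in)
  -- L y = ℓ
  have hLy : L y = ℓ := by
    have h1 : Tendsto (fun k => L (x (ns (φ k)))) atTop (nhds (L y)) :=
      ((hLcont y hyP).tendsto).comp hy_within
    have h2 : Tendsto (fun k => L (x (ns (φ k)))) atTop (nhds ℓ) :=
      hℓ.comp hidx
    exact tendsto_nhds_unique h1 h2
  -- L (M y) = ℓ
  have hLMy : L (M y) = ℓ := by
    have hMy : Tendsto (fun k => M (x (ns (φ k)))) atTop (nhds (M y)) :=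
      ((hMcont y hyP).tendsto).comp hy_within
    have hMyP : ∀ k, M (x (ns (φ k))) ∈ P := fun k => hMmaps (hseq_in k)
    have hMy' : Tendsto (fun k => M (x (ns (φ k)))) atTop (nhdsWithin (M y) P) :=
      tendsto_nhdsWithin_of_tendsto_nhds_of_eventually_within _ hMy
        (Eventually.of_forall hMyP)
    have h1 : Tendsto (fun k => L (M (x (ns (φ k))))) atTop (nhds (L (M y))) :=
      ((hLcont (M y) (hMmaps hyP)).tendsto).comp hMy'
    have heq : ∀ k, L (M (x (ns (φ k)))) = L (x (ns (φ k) + 1)) := fun k => by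
      rw [hsucc]
    have h2 : Tendsto (fun k => L (x (ns (φ k) + 1))) atTop (nhds ℓ) :=
      hℓ.comp ((tendsto_add_atTop_nat 1).comp hidx)
    have hfun : (fun k => L (M (x (ns (φ k))))) = fun k => L (x (ns (φ k) + 1)) :=
      funext fun k => heq k
    have h1' : Tendsto (fun k => L (x (ns (φ k) + 1))) atTop (nhds (L (M y))) := by
      rw [hfun] at h1; exact h1
    exact tendsto_nhds_unique h1' h2
  have hy_eq : y = lamstar := (hstationary y hyP).mp (by rw [hLy, hLMy])
  rw [hy_eq] at hyt
  exact hyt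
end

section
/- Let P(λ) be the row-stochastic matrix on a strongly connected directed graph G with entries P_{ij}(λ) = λ_j / Σ_{k∈N_i^+} λ_k for j ∈ N_i^+ and 0 otherwise, and let π be a probability distribution with π_i > 0 for all i. Then the first-order stationarity condition of ℓ̄(λ) = Σ_i π_i [log λ_i − log Σ_{k∈N_i^+} λ_k], namely π_i/λ_i = Σ_{j∈N_i^-} π_j / (Σ_{k∈N_j^+} λ_k) for all i, is equivalent to π being a stationary distribution of P(λ): π_i = Σ_{j∈N_i^-} P_{ji}(λ) π_j for all i. -/
open Finset

/-- The first-order stationarity condition of the asymptotic average log-likelihood,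
`π_i/λ_i = Σ_{j∈N_i^-} π_j / Σ_{k∈N_j^+} λ_k`, is equivalent to `π` being a stationary
distribution of the Luce transition matrix `P(λ)`:
`π_i = Σ_{j∈N_i^-} (λ_i / Σ_{k∈N_j^+} λ_k) π_j`. -/
theorem stationarity_iff_steady_state_inversion (n : ℕ)
    (N : Fin n → Finset (Fin n)) (hN : ∀ i, (N i).Nonempty)
    (hconn : ∀ i j : Fin n, Relation.ReflTransGen (fun u v => v ∈ N u) i j)
    (lam : Fin n → ℝ) (hlam : ∀ i, 0 < lam i)
    (π : Fin n → ℝ) (hπ : ∀ i, 0 < π i) (hπsum : ∑ i, π i = 1) :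
    (∀ i, π i / lam i =
        ∑ j ∈ Finset.univ.filter (fun j => i ∈ N j), π j / (∑ k ∈ N j, lam k)) ↔
    (∀ i, π i =
        ∑ j ∈ Finset.univ.filter (fun j => i ∈ N j), (lam i / (∑ k ∈ N j, lam k)) * π j) := by
  have key : ∀ i, (∑ j ∈ Finset.univ.filter (fun j => i ∈ N j), (lam i / (∑ k ∈ N j, lam k)) * π j)
      = lam i * ∑ j ∈ Finset.univ.filter (fun j => i ∈ N j), π j / (∑ k ∈ N j, lam k) := by
    intro i
    rw [Finset.mul_sum]
    apply Finset.sum_congr rfl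
    intro j _
    ring
  constructor
  · intro h i
    rw [key i, ← h i, mul_div_assoc', mul_div_cancel_left₀ _ (ne_of_gt (hlam i))]
  · intro h i
    have := h i
    rw [key i] at this
    rw [div_eq_iff (ne_of_gt (hlam i))]
    linarith [this]
end
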